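/- In an MCR game all of whose vertices have finite value (Val(v) ∈ ℤ for every v), the non-increasing sequence of i-step values (val_i)_{i≥0} stabilises after at most (2|V|−1)·W·|V| + |V| steps. -/

import Mathlib

open Filter

/-- A two-player turn-based weighted game graph. `owner v = true` means that
vertex `v` belongs to player Max, `owner v = false` that it belongs to player Min.
Every vertex has at least one successor. -/
structure Game (V : Type) where
  owner : V → Bool
  E : V → V → Prop
  nonempty : ∀ v, ∃ v', E v v'
  w : V → V → ℤ

namespace Game

variable {V : Type}

/-- The (reversed) history of the first `k` vertices of `π` (most recent first). -/
def hist (π : ℕ → V) (k : ℕ) : List V := (List.ofFn fun i : Fin k => π i).reverse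

/-- A strategy: given the (reversed) list of previously visited vertices and the current
vertex, it picks a successor of the current vertex. -/
structure Strategy (g : Game V) where
  next : List V → V → V
  valid : ∀ h v, g.E v (next h v)

/-- A memoryless strategy only depends on the current vertex. -/
def Strategy.Memoryless {g : Game V} (s : g.Strategy) : Prop :=
  ∀ h h' v, s.next h v = s.next h' v

/-- A finite-memory strategy is one encoded by a deterministic Moore machine
`⟨M, m0, up, dec⟩`: the choice after a finite play is `dec` applied to the memory state
reached by reading the play (the initial vertex is not read) and to the last vertex. -/
def Strategy.FiniteMemory {g : Game V} (s : g.Strategy) : Prop :=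
  ∃ (M : Type) (_ : Fintype M) (m0 : M) (up : M → V → M) (dec : M → V → V),
    ∀ h v, s.next h v = dec (List.foldl up m0 (((h.reverse ++ [v]).drop 1))) v

variable (g : Game V)

/-- Next vertex chosen by the owner of the current vertex. -/
def step (σ τ : g.Strategy) (h : List V) (v : V) : V :=
  if g.owner v then σ.next h v else τ.next h v

/-- Current vertex and reversed history after `k` steps of the play `Play(v, σ, τ)`. -/
def playAux (σ τ : g.Strategy) (v : V) : ℕ → V × List V
  | 0 => (v, [])
  | k+1 =>
      let p := playAux σ τ v k
      (g.step σ τ p.2 p.1, p.1 :: p.2)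

/-- `Play(v, σ, τ)`: the unique play starting in `v` and conforming to the
strategy `σ` of Max and the strategy `τ` of Min. -/
def play (σ τ : g.Strategy) (v : V) (k : ℕ) : V := (g.playAux σ τ v k).1

/-- An infinite sequence of vertices is a play when consecutive vertices are linked
by edges. -/
def IsPlay (π : ℕ → V) : Prop := ∀ k, g.E (π k) (π (k+1))

/-- A play conforms to a strategy `s` of the player `p` if, whenever the current vertex
belongs to `p`, the next vertex is the one prescribed by `s`. -/
def Conforms (p : Bool) (s : g.Strategy) (π : ℕ → V) : Prop :=
  ∀ k, g.owner (π k) = p → π (k+1) = s.next (hist π k) (π k)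

/-- Total-payoff of the prefix of length `k`: the sum of the first `k` edge weights. -/
def TPfin (π : ℕ → V) (k : ℕ) : ℤ := ∑ i ∈ Finset.range k, g.w (π i) (π (i+1))

/-- Total payoff of an infinite play: `liminf` of the payoffs of its prefixes. -/
noncomputable def TP (π : ℕ → V) : EReal :=
  liminf (fun k => (((g.TPfin π k : ℤ) : ℝ) : EReal)) atTop

/-- Mean payoff of an infinite play. -/
noncomputable def MP (π : ℕ → V) : EReal :=
  liminf (fun k => ((((g.TPfin π k : ℤ) : ℝ) / (k : ℝ)) : EReal)) atTop

open Classical in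
/-- Min-cost reachability payoff with target `t`: total payoff up to the first visit
of `t`, and `+∞` if `t` is never visited. -/
noncomputable def MCR (t : V) (π : ℕ → V) : EReal :=
  if h : ∃ k, π k = t then (((g.TPfin π (Nat.find h) : ℤ) : ℝ) : EReal) else ⊤

open Classical in
/-- `MCR` payoff restricted to reaching the target among the first `i+1` vertices. -/
noncomputable def MCRbd (t : V) (i : ℕ) (π : ℕ → V) : EReal :=
  if ∃ k ≤ i, π k = t then g.MCR t π else ⊤

/-- Value of a strategy `σ` of Max from `v` : `inf_τ P(Play(v, σ, τ))`. -/
noncomputable def valMax (P : (ℕ → V) → EReal) (v : V) (σ : g.Strategy) : EReal :=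
  ⨅ τ : g.Strategy, P (g.play σ τ v)

/-- Value of a strategy `τ` of Min from `v` : `sup_σ P(Play(v, σ, τ))`. -/
noncomputable def valMin (P : (ℕ → V) → EReal) (v : V) (τ : g.Strategy) : EReal :=
  ⨆ σ : g.Strategy, P (g.play σ τ v)

/-- Lower value `Val⁻(v) = sup_σ inf_τ P(Play(v, σ, τ))`. -/
noncomputable def lowerVal (P : (ℕ → V) → EReal) (v : V) : EReal :=
  ⨆ σ : g.Strategy, g.valMax P v σ

/-- Upper value `Val⁺(v) = inf_τ sup_σ P(Play(v, σ, τ))`. -/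
noncomputable def upperVal (P : (ℕ → V) → EReal) (v : V) : EReal :=
  ⨅ τ : g.Strategy, g.valMin P v τ

end Game

/-- A min-cost reachability game: a game together with a target vertex `t` whose only
outgoing edge is a self-loop of weight `0`. -/
structure MCRGame (V : Type) extends Game V where
  t : V
  loop : E t t
  loopOnly : ∀ v, E t v → v = t
  loopZero : w t t = 0

/-- The value of a (determined) MCR game. -/
noncomputable def MCRGame.Val {V : Type} (G : MCRGame V) : V → EReal :=
  fun v => G.toGame.lowerVal (G.toGame.MCR G.t) v

/-- The `i`-step value `val_i(v) = inf_τ sup_σ MCR_i(Play(v, σ, τ))`. -/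
noncomputable def MCRGame.ival {V : Type} (G : MCRGame V) (i : ℕ) : V → EReal :=
  fun v => G.toGame.upperVal (G.toGame.MCRbd G.t i) v

/-!
The `i`-step values are the iterates of the Bellman operator started from the function that is `0`
at the target and `⊤` elsewhere. The set of vertices of infinite value shrinks until it stops
shrinking, and then it is a trap in which Max avoids the target forever; as all values are finite,
it is empty after `|V|` steps, and from then on the values are integers of size at most `|V| W`.
Once the iterates stabilise they form a fixpoint from which every vertex reaches the target along
tight edges, so all values are at least `-(|V| - 1) W`. Each step after the `|V|`-th that changes
the values lowers their sum by at least one, which leaves room for at most `|V| (2|V| - 1) W` such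
steps; once a step changes nothing, no later step does.
-/

lemma Set.exists_lt_card_succ_eq_of_monotone {α : Type*} [Fintype α] {s : ℕ → Set α}
    (hs : Monotone s) (h0 : (s 0).Nonempty) : ∃ k < Fintype.card α, s (k + 1) = s k := by
  by_contra! h
  have hcard : ∀ k ≤ Fintype.card α, k + 1 ≤ (s k).ncard := by
    intro k hk
    induction k with
    | zero => exact (Set.ncard_pos (Set.toFinite _)).mpr h0
    | succ k ih =>
      have hlt := Set.ncard_lt_ncard ((hs (by omega : k ≤ k + 1)).lt_of_ne (h k hk).symm)
        (Set.toFinite _)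
      have := ih (by omega)
      omega
  have := hcard _ le_rfl
  have := Set.ncard_le_card (s (Fintype.card α))
  rw [Nat.card_eq_fintype_card] at this
  omega

lemma Int.exists_le_card_mul_succ_eq_of_antitone {ι : Type*} [Fintype ι] {f : ℕ → ι → ℤ}
    (hf : ∀ k x, f (k + 1) x ≤ f k x) {a : ℤ} (ha : ∀ k x, a ≤ f k x) {m : ℕ}
    (hm : ∀ x, f 0 x ≤ a + m) : ∃ k ≤ Fintype.card ι * m, f (k + 1) = f k := by
  by_contra! h
  set N := Fintype.card ι * m
  have hsum : ∀ k ≤ N + 1, ∑ x, f k x + k ≤ ∑ x, f 0 x := by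
    intro k hk
    induction k with
    | zero => simp
    | succ k ih =>
      obtain ⟨x, hx⟩ := Function.ne_iff.mp (h k (by omega))
      have hlt : ∑ x, f (k + 1) x < ∑ x, f k x :=
        Finset.sum_lt_sum (fun x _ => hf k x) ⟨x, Finset.mem_univ _, (hf k x).lt_of_ne hx⟩
      have := ih (by omega)
      push_cast
      omega
  have hlow : ∑ _x : ι, a ≤ ∑ x, f (N + 1) x := Finset.sum_le_sum fun x _ => ha _ x
  have hup : ∑ x, f 0 x ≤ ∑ _x : ι, (a + m) := Finset.sum_le_sum fun x _ => hm x
  simp only [Finset.sum_const, Finset.card_univ, nsmul_eq_mul] at hlow hup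
  have := hsum (N + 1) le_rfl
  push_cast [N] at this
  nlinarith

lemma EReal.neg_coe_add_coe_add (c : ℝ) (x : EReal) : ((-c : ℝ) : EReal) + (c + x) = x := by
  rw [← add_assoc, ← EReal.coe_add, neg_add_cancel, EReal.coe_zero, zero_add]

noncomputable def EReal.addLeftOrderIso (c : ℝ) : EReal ≃o EReal where
  toFun x := c + x
  invFun x := ((-c : ℝ) : EReal) + x
  left_inv x := EReal.neg_coe_add_coe_add c x
  right_inv x := by simpa using EReal.neg_coe_add_coe_add (-c) x
  map_rel_iff' {x y} := by
    change (c : EReal) + x ≤ c + y ↔ x ≤ y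
    exact ⟨fun h => by
      simpa only [EReal.neg_coe_add_coe_add] using add_le_add_right h ((-c : ℝ) : EReal),
      fun h => add_le_add_right h _⟩

lemma EReal.coe_add_iInf (c : ℝ) {ι : Sort*} (f : ι → EReal) :
    (c : EReal) + ⨅ i, f i = ⨅ i, (c + f i) := by
  exact (EReal.addLeftOrderIso c).map_iInf f

lemma EReal.coe_add_iSup (c : ℝ) {ι : Sort*} (f : ι → EReal) :
    (c : EReal) + ⨆ i, f i = ⨆ i, (c + f i) := by
  exact (EReal.addLeftOrderIso c).map_iSup f

lemma EReal.eq_top_of_coe_add_eq_top {c : ℝ} {x : EReal} (h : (c : EReal) + x = ⊤) : x = ⊤ := by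
  by_contra hx
  exact (EReal.add_ne_top_iff_ne_top_right (EReal.coe_ne_bot c) (EReal.coe_ne_top c)).mpr hx h

namespace Game

variable {V : Type} {g : Game V}

instance (g : Game V) : Nonempty g.Strategy :=
  ⟨⟨fun _ u => (g.nonempty u).choose, fun _ u => (g.nonempty u).choose_spec⟩⟩

def Strategy.shift (s : g.Strategy) (v : V) : g.Strategy where
  next h u := s.next (h ++ [v]) u
  valid _ _ := s.valid _ _

open Classical in
noncomputable def Strategy.prepend (v u : V) (huv : g.E v u) (s : g.Strategy) : g.Strategy where
  next h x := if h = [] ∧ x = v then u else s.next h.dropLast x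
  valid h x := by
    split_ifs with hx
    · exact hx.2 ▸ huv
    · exact s.valid _ _

/-- Follow `fam u`, where `u` is the second vertex of the play. -/
def Strategy.dispatch (fam : V → g.Strategy) : g.Strategy where
  next h u := (fam ((u :: h.dropLast).getLast (List.cons_ne_nil _ _))).next h.dropLast u
  valid _ _ := (fam _).valid _ _

lemma Strategy.prepend_next_nil {v u : V} (huv : g.E v u) (s : g.Strategy) :
    (Strategy.prepend v u huv s).next [] v = u := by
  simp [Strategy.prepend]

lemma Strategy.prepend_shift {v u : V} (huv : g.E v u) (s : g.Strategy) :
    (Strategy.prepend v u huv s).shift v = s := by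
  cases s
  simp [Strategy.shift, Strategy.prepend]

variable (g)

lemma play_zero (σ τ : g.Strategy) (v : V) : g.play σ τ v 0 = v := rfl

lemma play_succ_eq_step (σ τ : g.Strategy) (v : V) (k : ℕ) :
    g.play σ τ v (k + 1) = g.step σ τ (g.playAux σ τ v k).2 (g.play σ τ v k) := rfl

lemma playAux_succ (σ τ : g.Strategy) (v : V) (k : ℕ) :
    g.playAux σ τ v (k + 1) =
      ((g.playAux (σ.shift v) (τ.shift v) (g.step σ τ [] v) k).1,
       (g.playAux (σ.shift v) (τ.shift v) (g.step σ τ [] v) k).2 ++ [v]) := by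
  induction k with
  | zero => rfl
  | succ k ih =>
    rw [playAux, ih]
    rfl

lemma play_succ (σ τ : g.Strategy) (v : V) (k : ℕ) :
    g.play σ τ v (k + 1) = g.play (σ.shift v) (τ.shift v) (g.step σ τ [] v) k := by
  rw [play, playAux_succ]
  rfl

/-- The current vertex `u` with reversed history `h` lies on a play from `v` exactly when
`(u :: h).getLast? = some v`. -/
lemma play_congr {σ σ' τ τ' : g.Strategy} {v : V}
    (hσ : ∀ h u, (u :: h).getLast? = some v → σ.next h u = σ'.next h u)
    (hτ : ∀ h u, (u :: h).getLast? = some v → τ.next h u = τ'.next h u) :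
    g.play σ τ v = g.play σ' τ' v := by
  have key : ∀ k, g.playAux σ τ v k = g.playAux σ' τ' v k ∧
      ((g.playAux σ τ v k).1 :: (g.playAux σ τ v k).2).getLast? = some v := by
    intro k
    induction k with
    | zero => exact ⟨rfl, rfl⟩
    | succ k ih =>
      obtain ⟨heq, hlast⟩ := ih
      have hstep : g.step σ τ (g.playAux σ τ v k).2 (g.playAux σ τ v k).1 =
          g.step σ' τ' (g.playAux σ τ v k).2 (g.playAux σ τ v k).1 := by
        unfold step
        split
        · exact hσ _ _ hlast
        · exact hτ _ _ hlast
      refine ⟨?_, ?_⟩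
      · simp only [playAux, ← heq, hstep]
      · simpa only [playAux, List.getLast?_cons_cons] using hlast
  funext k
  exact congrArg Prod.fst (key k).1

lemma play_shift_dispatch (σ : g.Strategy) (fam : V → g.Strategy) (v x : V) :
    g.play σ ((Strategy.dispatch fam).shift v) x = g.play σ (fam x) x := by
  refine g.play_congr (fun _ _ _ => rfl) fun h u hlast => ?_
  have hx : (u :: h).getLast (List.cons_ne_nil _ _) = x := by
    rw [List.getLast?_eq_some_getLast (List.cons_ne_nil _ _)] at hlast
    exact Option.some_injective _ hlast
  simp only [Strategy.dispatch, Strategy.shift, List.dropLast_concat, hx]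

open Classical in
lemma MCRbd_succ {t : V} {π : ℕ → V} (h0 : π 0 ≠ t) (i : ℕ) :
    g.MCRbd t (i + 1) π = ((g.w (π 0) (π 1) : ℝ) : EReal) + g.MCRbd t i (fun k => π (k + 1)) := by
  have hTP : ∀ m, g.TPfin π (m + 1) = g.w (π 0) (π 1) + g.TPfin (fun k => π (k + 1)) m := by
    intro m
    simp only [TPfin]
    rw [Finset.sum_range_succ', add_comm]
  by_cases hr : ∃ k ≤ i, π (k + 1) = t
  · obtain ⟨k, hk, hkt⟩ := hr
    have hE : ∃ k, π k = t := ⟨k + 1, hkt⟩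
    have hE' : ∃ k, π (k + 1) = t := ⟨k, hkt⟩
    rw [MCRbd, MCRbd, if_pos ⟨k + 1, by omega, hkt⟩, if_pos ⟨k, hk, hkt⟩, MCR, MCR, dif_pos hE,
      dif_pos hE', Nat.find_comp_succ hE hE' h0, hTP]
    push_cast
    rfl
  · have hr' : ¬ ∃ k ≤ i + 1, π k = t := by
      rintro ⟨_ | k, hk, hkt⟩
      exacts [h0 hkt, hr ⟨k, by omega, hkt⟩]
    rw [MCRbd, MCRbd, if_neg hr', if_neg hr, EReal.coe_add_top]

lemma MCRbd_play_succ {t v : V} (hv : v ≠ t) (σ τ : g.Strategy) (i : ℕ) :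
    g.MCRbd t (i + 1) (g.play σ τ v) = ((g.w v (g.step σ τ [] v) : ℝ) : EReal) +
      g.MCRbd t i (g.play (σ.shift v) (τ.shift v) (g.step σ τ [] v)) := by
  rw [g.MCRbd_succ hv]
  simp only [g.play_succ, play_zero]

end Game

namespace MCRGame

variable {V : Type} (G : MCRGame V)

open scoped Classical

noncomputable def bellman (f : V → EReal) (v : V) : EReal :=
  if v = G.t then 0
  else if G.owner v then ⨆ u : {u // G.E v u}, ((G.w v u : ℝ) : EReal) + f u
  else ⨅ u : {u // G.E v u}, ((G.w v u : ℝ) : EReal) + f u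

lemma bellman_mono : Monotone G.bellman := by
  intro f f' hf v
  unfold bellman
  split_ifs
  · exact le_rfl
  · exact iSup_mono fun u => add_le_add_right (hf u) _
  · exact iInf_mono fun u => add_le_add_right (hf u) _

lemma exists_bellman_eq_add [Finite V] (f : V → EReal) {v : V} (hv : v ≠ G.t) :
    ∃ u, G.E v u ∧ G.bellman f v = ((G.w v u : ℝ) : EReal) + f u := by
  have : Nonempty {u // G.E v u} := let ⟨u, hu⟩ := G.nonempty v; ⟨⟨u, hu⟩⟩
  unfold bellman
  rw [if_neg hv]
  split
  · obtain ⟨u, hu⟩ := exists_eq_ciSup_of_finite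
      (f := fun u : {u // G.E v u} => ((G.w v u : ℝ) : EReal) + f u)
    exact ⟨u, u.2, hu.symm⟩
  · obtain ⟨u, hu⟩ := exists_eq_ciInf_of_finite
      (f := fun u : {u // G.E v u} => ((G.w v u : ℝ) : EReal) + f u)
    exact ⟨u, u.2, hu.symm⟩

lemma add_le_bellman (f : V → EReal) {v u : V} (hv : v ≠ G.t) (hmax : G.owner v = true)
    (hu : G.E v u) : ((G.w v u : ℝ) : EReal) + f u ≤ G.bellman f v := by
  rw [bellman, if_neg hv, if_pos hmax]
  exact le_iSup_of_le (⟨u, hu⟩ : {u // G.E v u}) le_rfl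

lemma bellman_le_add (f : V → EReal) {v u : V} (hv : v ≠ G.t) (hmin : G.owner v = false)
    (hu : G.E v u) : G.bellman f v ≤ ((G.w v u : ℝ) : EReal) + f u := by
  rw [bellman, if_neg hv, if_neg (by simp [hmin])]
  exact iInf_le_of_le (⟨u, hu⟩ : {u // G.E v u}) le_rfl

lemma ival_eq (i : ℕ) (v : V) :
    G.ival i v = ⨅ τ : G.Strategy, ⨆ σ : G.Strategy, G.MCRbd G.t i (G.play σ τ v) := rfl

lemma ival_target (i : ℕ) : G.ival i G.t = 0 := by
  have hπ (σ τ : G.Strategy) : G.MCRbd G.t i (G.play σ τ G.t) = 0 := by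
    have hE : ∃ k, G.play σ τ G.t k = G.t := ⟨0, rfl⟩
    rw [Game.MCRbd, if_pos ⟨0, i.zero_le, rfl⟩, Game.MCR, dif_pos hE,
      (Nat.find_eq_zero hE).mpr rfl]
    simp [Game.TPfin]
  simp only [ival_eq, hπ, iSup_const, iInf_const]

lemma ival_zero_of_ne {v : V} (hv : v ≠ G.t) : G.ival 0 v = ⊤ := by
  have hπ (σ τ : G.Strategy) : G.MCRbd G.t 0 (G.play σ τ v) = ⊤ := by
    rw [Game.MCRbd, if_neg]
    rintro ⟨k, hk, hkt⟩
    obtain rfl : k = 0 := by omega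
    exact hv hkt
  simp only [ival_eq, hπ, iSup_const, iInf_const]

lemma ival_antitone : Antitone G.ival := by
  intro i j hij v
  refine iInf_mono fun τ => iSup_mono fun σ => ?_
  unfold Game.MCRbd
  by_cases hi : ∃ k ≤ i, G.play σ τ v k = G.t
  · obtain ⟨k, hk, hkt⟩ := hi
    rw [if_pos ⟨k, hk.trans hij, hkt⟩, if_pos ⟨k, hk, hkt⟩]
  · rw [if_neg hi]
    exact le_top

lemma Val_le_ival (i : ℕ) (v : V) : G.Val v ≤ G.ival i v := by
  refine (iSup_iInf_le_iInf_iSup fun σ τ => G.MCR G.t (G.play σ τ v)).trans ?_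
  refine iInf_mono fun τ => iSup_mono fun σ => ?_
  unfold Game.MCRbd
  split_ifs
  exacts [le_rfl, le_top]

lemma step_prepend_eq {v u : V} (hu : G.E v u) (σ τ : G.Strategy)
    (hmove : G.owner v = true ∨ τ.next [] v = u) :
    G.step (Game.Strategy.prepend v u hu σ) τ [] v = u := by
  unfold Game.step
  rcases hown : G.owner v
  · simpa [hown] using hmove
  · simp [Game.Strategy.prepend_next_nil]

lemma add_ival_le_iSup_MCRbd {v u : V} (hv : v ≠ G.t) (hu : G.E v u) (i : ℕ)
    (τ : G.Strategy) (hmove : G.owner v = true ∨ τ.next [] v = u) :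
    ((G.w v u : ℝ) : EReal) + G.ival i u ≤ ⨆ σ, G.MCRbd G.t (i + 1) (G.play σ τ v) := by
  calc ((G.w v u : ℝ) : EReal) + G.ival i u
      ≤ ((G.w v u : ℝ) : EReal) + ⨆ σ, G.MCRbd G.t i (G.play σ (τ.shift v) u) :=
        add_le_add_right (iInf_le _ _) _
    _ = ⨆ σ, ((G.w v u : ℝ) : EReal) + G.MCRbd G.t i (G.play σ (τ.shift v) u) :=
        EReal.coe_add_iSup _ _
    _ ≤ ⨆ σ, G.MCRbd G.t (i + 1) (G.play σ τ v) := by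
        refine iSup_le fun σ => le_iSup_of_le (Game.Strategy.prepend v u hu σ) (le_of_eq ?_)
        rw [Game.MCRbd_play_succ _ hv, G.step_prepend_eq hu σ τ hmove,
          Game.Strategy.prepend_shift]

lemma bellman_ival_le_ival_succ (i : ℕ) (v : V) : G.bellman (G.ival i) v ≤ G.ival (i + 1) v := by
  by_cases hv : v = G.t
  · subst hv
    rw [bellman, if_pos rfl, ival_target]
  rw [bellman, if_neg hv, ival_eq (i := i + 1)]
  split
  · refine iSup_le fun u => le_iInf fun τ => ?_
    exact G.add_ival_le_iSup_MCRbd hv u.2 i τ (Or.inl ‹_›)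
  · refine le_iInf fun τ => iInf_le_of_le ⟨τ.next [] v, τ.valid _ _⟩ ?_
    exact G.add_ival_le_iSup_MCRbd hv (τ.valid _ _) i τ (Or.inr rfl)

lemma ival_succ_le_add_ival {v u : V} (hv : v ≠ G.t) (hmin : G.owner v = false) (hu : G.E v u)
    (i : ℕ) : G.ival (i + 1) v ≤ ((G.w v u : ℝ) : EReal) + G.ival i u := by
  rw [G.ival_eq (i + 1) v, G.ival_eq i u, EReal.coe_add_iInf]
  refine le_iInf fun τ => iInf_le_of_le (Game.Strategy.prepend v u hu τ) (iSup_le fun σ => ?_)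
  have hstep : G.step σ (Game.Strategy.prepend v u hu τ) [] v = u := by
    simp [Game.step, hmin, Game.Strategy.prepend_next_nil]
  rw [Game.MCRbd_play_succ _ hv, hstep, Game.Strategy.prepend_shift]
  gcongr
  exact le_iSup_of_le (σ.shift v) le_rfl

/-- Min answers each first move of Max with a strategy that is good from that successor; complete
distributivity turns the sup over successors of an inf over strategies into an inf over families. -/
lemma ival_succ_le_iSup {v : V} (hv : v ≠ G.t) (hmax : G.owner v = true) (i : ℕ) :
    G.ival (i + 1) v ≤ ⨆ u : {u // G.E v u}, ((G.w v u : ℝ) : EReal) + G.ival i u := by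
  simp only [ival_eq (i := i), EReal.coe_add_iInf, iSup_iInf_eq]
  refine le_iInf fun fam => ?_
  let τ : G.Strategy := Game.Strategy.dispatch fun u =>
    if hu : G.E v u then fam ⟨u, hu⟩ else Classical.arbitrary G.Strategy
  refine iInf_le_of_le τ (iSup_le fun σ => ?_)
  have hu : G.E v (σ.next [] v) := σ.valid _ _
  refine le_iSup_of_le ⟨_, hu⟩ ?_
  have hstep : G.step σ τ [] v = σ.next [] v := by simp [Game.step, hmax]
  rw [Game.MCRbd_play_succ _ hv, hstep, Game.play_shift_dispatch, dif_pos hu]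
  gcongr
  exact le_iSup_of_le (σ.shift v) le_rfl

lemma ival_succ (i : ℕ) : G.ival (i + 1) = G.bellman (G.ival i) := by
  funext v
  refine le_antisymm ?_ (G.bellman_ival_le_ival_succ i v)
  by_cases hv : v = G.t
  · rw [hv, ival_target, bellman, if_pos rfl]
  rw [bellman, if_neg hv]
  rcases hown : G.owner v
  · exact le_iInf fun u => G.ival_succ_le_add_ival hv hown u.2 i
  · exact G.ival_succ_le_iSup hv hown i

lemma ival_eq_of_succ_eq {j : ℕ} (hj : G.ival (j + 1) = G.ival j) {i : ℕ} (hij : j ≤ i) :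
    G.ival i = G.ival j := by
  induction i, hij using Nat.le_induction with
  | base => rfl
  | succ i _ ih => rw [ival_succ, ih, ← ival_succ, hj]

lemma le_ival_of_le_bellman {h : V → EReal} (ht : h G.t ≤ 0) (hh : h ≤ G.bellman h) (i : ℕ) :
    h ≤ G.ival i := by
  induction i with
  | zero =>
    intro v
    by_cases hv : v = G.t
    · rwa [hv, ival_target]
    · rw [G.ival_zero_of_ne hv]
      exact le_top
  | succ i ih => exact (hh.trans (G.bellman_mono ih)).trans_eq (G.ival_succ i).symm

lemma ival_eq_top_or_exists_int_le [Finite V] {W : ℕ}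
    (hW : ∀ v v', G.E v v' → |G.w v v'| ≤ (W : ℤ)) (i : ℕ) (v : V) :
    G.ival i v = ⊤ ∨ ∃ m : ℤ, m ≤ i * W ∧ G.ival i v = ((m : ℝ) : EReal) := by
  induction i generalizing v with
  | zero =>
    by_cases hv : v = G.t
    · exact Or.inr ⟨0, by simp, by simp [hv, ival_target]⟩
    · exact Or.inl (G.ival_zero_of_ne hv)
  | succ i ih =>
    by_cases hv : v = G.t
    · exact Or.inr ⟨0, by positivity, by simp [hv, ival_target]⟩
    obtain ⟨u, hu, heq⟩ := G.exists_bellman_eq_add (G.ival i) hv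
    rw [ival_succ, heq]
    rcases ih u with htop | ⟨m, hm, hmu⟩
    · exact Or.inl (by rw [htop, EReal.coe_add_top])
    · refine Or.inr ⟨G.w v u + m, ?_, by rw [hmu]; push_cast; rfl⟩
      have := (abs_le.mp (hW v u hu)).2
      push_cast
      linarith

lemma Val_eq_top_of_trap (S : Set V) (htS : G.t ∉ S)
    (hmax : ∀ v ∈ S, G.owner v = true → ∃ u ∈ S, G.E v u)
    (hmin : ∀ v ∈ S, G.owner v = false → ∀ u, G.E v u → u ∈ S) {v : V} (hv : v ∈ S) :
    G.Val v = ⊤ := by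
  let σ : G.Strategy :=
    ⟨fun _ x => if hx : ∃ u ∈ S, G.E x u then hx.choose else (G.nonempty x).choose, fun _ x => by
      split_ifs with hx
      exacts [hx.choose_spec.2, (G.nonempty x).choose_spec]⟩
  have hstay (τ : G.Strategy) (k : ℕ) : G.play σ τ v k ∈ S := by
    induction k with
    | zero => exact hv
    | succ k ih =>
      rw [Game.play_succ_eq_step]
      unfold Game.step
      rcases hown : G.owner (G.play σ τ v k)
      · exact hmin _ ih hown _ (τ.valid _ _)
      · have hx := hmax _ ih hown
        simpa [σ, hx] using hx.choose_spec.1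
  refine top_unique (le_iSup_of_le σ (le_iInf fun τ => ?_))
  rw [Game.MCR, dif_neg]
  rintro ⟨k, hk⟩
  exact htS (hk ▸ hstay τ k)

/-- The vertices of infinite `k`-step value form a non-increasing family of sets; once it stops
shrinking it is a trap for Max, hence empty when all values are finite. -/
lemma ival_ne_top [Fintype V] (hfin : ∀ v, G.Val v ≠ ⊤) {j : ℕ} (hj : Fintype.card V ≤ j)
    (v : V) : G.ival j v ≠ ⊤ := by
  obtain ⟨k, hk, hkeq⟩ := Set.exists_lt_card_succ_eq_of_monotone
    (s := fun k => {v | G.ival k v ≠ ⊤})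
    (fun i j hij v hv => ne_top_of_le_ne_top hv (G.ival_antitone hij v))
    ⟨G.t, by simp [ival_target]⟩
  have hsucc (x : V) (hx : G.ival k x = ⊤) : G.bellman (G.ival k) x = ⊤ := by
    have := Set.ext_iff.mp hkeq x
    simp only [Set.mem_ofPred_eq, hx, ne_eq, not_true_eq_false, iff_false, not_not] at this
    rwa [ival_succ] at this
  have hxt {x : V} (hx : G.ival k x = ⊤) : x ≠ G.t := by
    rintro rfl
    simp [ival_target] at hx
  have htop : G.ival k v ≠ ⊤ := fun hv => hfin v <| G.Val_eq_top_of_trap {x | G.ival k x = ⊤}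
    (by simp [ival_target])
    (fun x hx _ => by
      obtain ⟨u, hu, heq⟩ := G.exists_bellman_eq_add (G.ival k) (hxt hx)
      rw [hsucc x hx] at heq
      exact ⟨u, EReal.eq_top_of_coe_add_eq_top heq.symm, hu⟩)
    (fun x hx hown u hu => by
      have := (hsucc x hx).symm.trans_le (G.bellman_le_add (G.ival k) (hxt hx) hown hu)
      exact EReal.eq_top_of_coe_add_eq_top (top_unique this))
    hv
  exact ne_top_of_le_ne_top htop (G.ival_antitone (by omega) v)


lemma exists_int_eq_ival [Fintype V] {W : ℕ} (hW : ∀ v v', G.E v v' → |G.w v v'| ≤ (W : ℤ))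
    (hfin : ∀ v, G.Val v ≠ ⊤) :
    ∃ z : ℕ → V → ℤ, (∀ k v, G.ival (Fintype.card V + k) v = ((z k v : ℝ) : EReal)) ∧
      (∀ k v, z (k + 1) v ≤ z k v) ∧ ∀ v, z 0 v ≤ Fintype.card V * W := by
  have hint (k : ℕ) (v : V) : ∃ m : ℤ, (k = 0 → m ≤ Fintype.card V * W) ∧
      G.ival (Fintype.card V + k) v = ((m : ℝ) : EReal) := by
    rcases G.ival_eq_top_or_exists_int_le hW (Fintype.card V + k) v with htop | ⟨m, hm, hmv⟩
    · exact absurd htop (G.ival_ne_top hfin (by omega) v)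
    · exact ⟨m, fun hk => by simpa [hk] using hm, hmv⟩
  choose z hzle hz using hint
  refine ⟨z, hz, fun k v => ?_, fun v => hzle 0 v rfl⟩
  have := G.ival_antitone (show Fintype.card V + k ≤ Fintype.card V + (k + 1) by omega) v
  rwa [hz, hz, EReal.coe_le_coe_iff, Int.cast_le] at this

lemma exists_ival_succ_eq [Fintype V] {W : ℕ} (hW : ∀ v v', G.E v v' → |G.w v v'| ≤ (W : ℤ))
    (hfin : ∀ v : V, ∃ m : ℤ, G.Val v = ((m : ℝ) : EReal)) :
    ∃ J, ∃ f : V → ℤ, (∀ v, G.ival J v = ((f v : ℝ) : EReal)) ∧ G.ival (J + 1) = G.ival J := by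
  choose val hval using hfin
  obtain ⟨z, hz, hanti, hup⟩ :=
    G.exists_int_eq_ival hW fun v => by simp [hval v]
  have : Nonempty V := ⟨G.t⟩
  obtain ⟨v₀, hv₀⟩ := Finite.exists_min val
  have hlow (k : ℕ) (v : V) : val v₀ ≤ z k v := by
    have := G.Val_le_ival (Fintype.card V + k) v
    rw [hval, hz, EReal.coe_le_coe_iff, Int.cast_le] at this
    exact (hv₀ v).trans this
  obtain ⟨k, -, hk⟩ := Int.exists_le_card_mul_succ_eq_of_antitone hanti hlow
    (m := (Fintype.card V * W - val v₀).toNat) fun v => by have := hup v; omega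
  refine ⟨Fintype.card V + k, z k, hz k, funext fun v => ?_⟩
  rw [add_assoc, hz, hz, hk]

def tightReach (f : V → ℤ) : ℕ → Set V
  | 0 => {G.t}
  | k + 1 => tightReach f k ∪ {v | ∃ u ∈ tightReach f k, G.E v u ∧ f v = G.w v u + f u}

lemma tightReach_mono (f : V → ℤ) : Monotone (G.tightReach f) :=
  monotone_nat_of_le_succ fun _ => Set.subset_union_left

lemma neg_mul_le_of_mem_tightReach {W : ℕ} (hW : ∀ v v', G.E v v' → |G.w v v'| ≤ (W : ℤ))
    {f : V → ℤ} (ht : f G.t = 0) {k : ℕ} {v : V} (hv : v ∈ G.tightReach f k) :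
    -(k * W : ℤ) ≤ f v := by
  induction k generalizing v with
  | zero =>
    obtain rfl : v = G.t := hv
    simp [ht]
  | succ k ih =>
    rcases hv with hv | ⟨u, hu, huv, heq⟩
    · have := ih hv
      push_cast
      nlinarith
    · have := ih hu
      have := (abs_le.mp (hW v u huv)).1
      push_cast
      linarith

lemma fixpoint_target {f : V → ℤ}
    (hfix : Function.IsFixedPt G.bellman fun u => ((f u : ℝ) : EReal)) :
    f G.t = 0 := by
  have := congrFun hfix G.t
  rw [bellman, if_pos rfl] at this
  exact_mod_cast this.symm

lemma le_bellman_add_indicator [Finite V] {f : V → ℤ}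
    (hfix : Function.IsFixedPt G.bellman fun u => ((f u : ℝ) : EReal)) {A : Set V}
    (htA : G.t ∉ A)
    (hA : ∀ v ∈ A, ∀ u, G.E v u → f v = G.w v u + f u → u ∈ A) :
    (fun v => (((f v + A.indicator 1 v : ℤ) : ℝ) : EReal)) ≤
      G.bellman fun v => (((f v + A.indicator 1 v : ℤ) : ℝ) : EReal) := by
  intro v
  dsimp only
  by_cases hvt : v = G.t
  · subst hvt
    simp [bellman, Set.indicator_of_notMem htA, G.fixpoint_target hfix]
  by_cases hvA : v ∉ A
  · rw [Set.indicator_of_notMem hvA, add_zero, ← congrFun hfix v]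
    refine G.bellman_mono (fun u => ?_) v
    have : 0 ≤ A.indicator (1 : V → ℤ) u := Set.indicator_nonneg (fun _ _ => zero_le_one) u
    rw [EReal.coe_le_coe_iff, Int.cast_le]
    exact le_add_of_nonneg_right this
  rw [not_not] at hvA
  rcases hown : G.owner v
  · rw [bellman, if_neg hvt, if_neg (by simp [hown])]
    refine le_iInf fun u => ?_
    have hle := (congrFun hfix v).symm.trans_le
      (G.bellman_le_add (fun u => ((f u : ℝ) : EReal)) hvt hown u.2)
    rw [← EReal.coe_add, EReal.coe_le_coe_iff, ← Int.cast_add, Int.cast_le] at hle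
    rw [← EReal.coe_add, EReal.coe_le_coe_iff, ← Int.cast_add, Int.cast_le,
      Set.indicator_of_mem hvA]
    by_cases hu : (u : V) ∈ A
    · rw [Set.indicator_of_mem hu]
      simp only [Pi.one_apply]
      omega
    · have : f v ≠ G.w v u + f u := fun h => hu (hA v hvA u u.2 h)
      rw [Set.indicator_of_notMem hu]
      simp only [Pi.one_apply]
      omega
  · obtain ⟨u, hu, heq⟩ := G.exists_bellman_eq_add (fun u => ((f u : ℝ) : EReal)) hvt
    rw [congrFun hfix, ← EReal.coe_add, EReal.coe_eq_coe_iff, ← Int.cast_add, Int.cast_inj] at heq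
    refine le_of_eq_of_le ?_ (G.add_le_bellman _ hvt hown hu)
    rw [Set.indicator_of_mem hvA, Set.indicator_of_mem (hA v hvA u hu heq), ← EReal.coe_add,
      ← Int.cast_add, heq]
    simp only [Pi.one_apply, add_assoc]

/-- Every vertex reaches the target along tight edges of `f`: otherwise raising `f` by one off the
tight-reach set would give a pre-fixpoint above `f`. -/
lemma neg_mul_le_of_bellman_fixpoint [Fintype V] {W : ℕ}
    (hW : ∀ v v', G.E v v' → |G.w v v'| ≤ (W : ℤ)) {f : V → ℤ}
    (hfix : Function.IsFixedPt G.bellman fun u => ((f u : ℝ) : EReal))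
    (hgreatest : ∀ h : V → EReal, h G.t ≤ 0 → h ≤ G.bellman h → ∀ v, h v ≤ ((f v : ℝ) : EReal))
    (v : V) :
    -((Fintype.card V - 1 : ℤ) * W) ≤ f v := by
  obtain ⟨K, hK, hKeq⟩ := Set.exists_lt_card_succ_eq_of_monotone (G.tightReach_mono f)
    ⟨G.t, rfl⟩
  have hall (x : V) : x ∈ G.tightReach f K := by
    by_contra hx
    have hclosed : ∀ y ∈ (G.tightReach f K)ᶜ, ∀ u, G.E y u → f y = G.w y u + f u →
        u ∈ (G.tightReach f K)ᶜ := fun y hy u hyu heq hu =>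
      hy (by rw [← hKeq]; exact Or.inr ⟨u, hu, hyu, heq⟩)
    have := hgreatest _ ?_ (G.le_bellman_add_indicator hfix ?_ hclosed) x
    · rw [Set.indicator_of_mem (show x ∈ (G.tightReach f K)ᶜ from hx), EReal.coe_le_coe_iff,
        Int.cast_le] at this
      simp at this
    · have : G.t ∈ G.tightReach f K := G.tightReach_mono f K.zero_le rfl
      simp [Set.indicator_of_notMem (show G.t ∉ (G.tightReach f K)ᶜ from not_not.mpr this),
        G.fixpoint_target hfix]
    · exact not_not.mpr (G.tightReach_mono f K.zero_le rfl)
  have := G.neg_mul_le_of_mem_tightReach hW (G.fixpoint_target hfix) (hall v)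
  have hKn : (K : ℤ) ≤ Fintype.card V - 1 := by omega
  nlinarith

lemma neg_mul_le_ival [Fintype V] {W : ℕ} (hW : ∀ v v', G.E v v' → |G.w v v'| ≤ (W : ℤ))
    (hfin : ∀ v : V, ∃ m : ℤ, G.Val v = ((m : ℝ) : EReal)) (i : ℕ) (v : V) :
    (((-((Fintype.card V - 1 : ℤ) * W) : ℤ) : ℝ) : EReal) ≤ G.ival i v := by
  obtain ⟨J, f, hf, hJ⟩ := G.exists_ival_succ_eq hW hfin
  have hfeq : G.ival J = fun v => ((f v : ℝ) : EReal) := funext hf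
  have hfix : Function.IsFixedPt G.bellman fun u => ((f u : ℝ) : EReal) := by
    rw [Function.IsFixedPt, ← hfeq, ← ival_succ, hJ]
  have hlow := G.neg_mul_le_of_bellman_fixpoint hW hfix
    (fun h ht hh v => (G.le_ival_of_le_bellman ht hh J v).trans_eq (hf v)) v
  calc (((-((Fintype.card V - 1 : ℤ) * W) : ℤ) : ℝ) : EReal) ≤ G.ival J v := by
        rw [hf]; exact_mod_cast hlow
    _ = G.ival (max i J) v := by rw [G.ival_eq_of_succ_eq hJ (le_max_right i J)]
    _ ≤ G.ival i v := G.ival_antitone (le_max_left i J) v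

end MCRGame

/-- in an MCR game all of whose vertices have finite value, the sequence
`(val_i)` is non-increasing and stabilises after at most
`(2|V|−1)·W·|V| + |V|` steps. -/
theorem statement_8 {V : Type} [Fintype V] (G : MCRGame V) (W : ℕ)
    (hW : ∀ v v', G.E v v' → |G.w v v'| ≤ (W : ℤ))
    (hfin : ∀ v : V, ∃ m : ℤ, G.Val v = ((m : ℝ) : EReal)) :
    (∀ i j : ℕ, i ≤ j → ∀ v : V, G.ival j v ≤ G.ival i v) ∧
    (∀ i : ℕ,
      (2 * Fintype.card V - 1) * W * Fintype.card V + Fintype.card V ≤ i →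
      G.ival i =
        G.ival ((2 * Fintype.card V - 1) * W * Fintype.card V + Fintype.card V)) := by
  refine ⟨fun i j hij v => G.ival_antitone hij v, fun i hi => ?_⟩
  obtain ⟨z, hz, hanti, hup⟩ := G.exists_int_eq_ival hW fun v => by
    obtain ⟨m, hm⟩ := hfin v
    simp [hm]
  set n := Fintype.card V
  have hn : 1 ≤ n := Fintype.card_pos_iff.mpr ⟨G.t⟩
  have hlow (k : ℕ) (v : V) : -((n - 1 : ℤ) * W) ≤ z k v := by
    have := G.neg_mul_le_ival hW hfin (n + k) v
    rwa [hz, EReal.coe_le_coe_iff, Int.cast_le] at this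
  -- the values after `n` steps are integers in `[-(n - 1) W, n W]`, a range of `(2n - 1) W`
  obtain ⟨k, hk, hzk⟩ : ∃ k ≤ n * ((2 * n - 1) * W), z (k + 1) = z k :=
    Int.exists_le_card_mul_succ_eq_of_antitone hanti hlow
      (m := (2 * n - 1) * W) fun v => by
        have := hup v
        push_cast [Nat.cast_sub (by omega : 1 ≤ 2 * n)]
        linarith
  have hstab : G.ival (n + k + 1) = G.ival (n + k) := funext fun v => by
    rw [add_assoc, hz, hz, hzk]
  rw [Nat.mul_comm] at hk
  rw [G.ival_eq_of_succ_eq hstab (by omega : n + k ≤ i),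
    G.ival_eq_of_succ_eq hstab (by omega : n + k ≤ (2 * n - 1) * W * n + n)]
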